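/- Let B be a finite set of cardinality N, and define type cardinalities by card(ι) = 2^N for base types, and card(σ₁ ⇒ ... ⇒ σ_n ⇒ ι) = card(ι)^(card(σ₁)·...·card(σ_n)). If a simple type σ has order at most K and every arrow-sequence in σ has length at most d (with n+1 ≤ d), then card(σ) ≤ exp₂^{K+1}(d^K · N). -/

import Mathlib

/-- Iterated exponential: `exp2 0 n = n`, `exp2 (K+1) n = 2 ^ exp2 K n`. -/
def exp2 : ℕ → ℕ → ℕ
  | 0, n => n
  | K + 1, n => 2 ^ exp2 K n

/-- Simple types over a countable set of sorts. -/
inductive Ty where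
  | base : ℕ → Ty
  | arrow : Ty → Ty → Ty

/-- Type order: sorts have order 0, `σ ⇒ τ` has order `max (order σ + 1) (order τ)`. -/
def Ty.order : Ty → ℕ
  | .base _ => 0
  | .arrow σ τ => max (σ.order + 1) τ.order

/-- Length of the arrow spine of a type: `σ₁ ⇒ ... ⇒ σ_n ⇒ ι` has spine length `n + 1`. -/
def Ty.spineLen : Ty → ℕ
  | .base _ => 1
  | .arrow _ τ => τ.spineLen + 1

/-- Maximal spine length of any (sub)type occurring in a type. -/
def Ty.maxSpine : Ty → ℕ
  | .base _ => 1
  | .arrow σ τ => max (τ.spineLen + 1) (max σ.maxSpine τ.maxSpine)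

/-- Cardinality of the interpretation of a type, relative to a set `B` of
cardinality `N`: a sort is interpreted as the powerset of (part of) `B`, and an
arrow type as the full function space. -/
def cardT (N : ℕ) : Ty → ℕ
  | .base _ => 2 ^ N
  | .arrow σ τ => cardT N τ ^ cardT N σ

/-!
Write a type of order at most `K + 1` as `σ₁ ⇒ ⋯ ⇒ σₙ ⇒ ι`, with `n < d` and every `σᵢ` of
order at most `K`. Its cardinality is `2 ^ (N * ∏ cardT σᵢ) ≤ 2 ^ (N * c ^ n)`, where by induction
on the order `c = exp2 (K + 1) (d ^ K * N)` bounds every `cardT σᵢ`. Since `N ≤ c`, the exponent is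
at most `c ^ d`, and `c ^ d ≤ exp2 (K + 1) (d ^ (K + 1) * N)` because multiplying the argument of an
iterated exponential by `d` multiplies its value by at least `d`.
-/

theorem self_le_exp2 (K n : ℕ) : n ≤ exp2 K n := by
  induction K with
  | zero => rfl
  | succ K ih => exact ih.trans Nat.lt_two_pow_self.le

theorem mul_exp2_le_exp2_mul (K d : ℕ) {m : ℕ} (hm : 1 ≤ m) :
    d * exp2 K m ≤ exp2 K (d * m) := by
  induction K with
  | zero => rfl
  | succ K ih =>
    obtain _ | e := d
    · simp
    have ha : 1 ≤ exp2 K m := hm.trans (self_le_exp2 K m)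
    calc (e + 1) * 2 ^ exp2 K m ≤ 2 ^ e * 2 ^ exp2 K m :=
          Nat.mul_le_mul_right _ Nat.lt_two_pow_self
      _ = 2 ^ (exp2 K m + e) := by rw [pow_add, mul_comm]
      _ ≤ 2 ^ exp2 K ((e + 1) * m) := Nat.pow_le_pow_right two_pos (by nlinarith)

theorem exp2_succ_pow_le (K d : ℕ) {m : ℕ} (hm : 1 ≤ m) :
    exp2 (K + 1) m ^ d ≤ exp2 (K + 1) (d * m) := by
  calc exp2 (K + 1) m ^ d = 2 ^ (d * exp2 K m) := by rw [exp2, ← pow_mul, mul_comm]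
    _ ≤ 2 ^ exp2 K (d * m) := Nat.pow_le_pow_right two_pos (mul_exp2_le_exp2_mul K d hm)

namespace Ty

def args : Ty → List Ty
  | .base _ => []
  | .arrow σ τ => σ :: τ.args

theorem spineLen_eq_length_args_add_one (σ : Ty) : σ.spineLen = σ.args.length + 1 := by
  induction σ with
  | base _ => rfl
  | arrow _ τ _ ih => simp [spineLen, args, ih]

theorem length_args_lt_maxSpine (σ : Ty) : σ.args.length < σ.maxSpine := by
  cases σ with
  | base _ => simp [args, maxSpine]
  | arrow σ τ =>
    simp only [args, maxSpine, List.length_cons, spineLen_eq_length_args_add_one]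
    omega

theorem order_lt_of_mem_args {ρ σ : Ty} (h : ρ ∈ σ.args) : ρ.order < σ.order := by
  induction σ with
  | base _ => simp [args] at h
  | arrow σ τ _ ih =>
    simp only [args, List.mem_cons] at h
    rcases h with rfl | h
    · simp [order]
    · exact (ih h).trans_le (le_max_right _ _)

theorem maxSpine_le_of_mem_args {ρ σ : Ty} (h : ρ ∈ σ.args) : ρ.maxSpine ≤ σ.maxSpine := by
  induction σ with
  | base _ => simp [args] at h
  | arrow σ τ _ ih =>
    simp only [args, List.mem_cons] at h
    simp only [maxSpine]
    rcases h with rfl | h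
    · omega
    · have := ih h
      omega

end Ty

theorem cardT_zero (σ : Ty) : cardT 0 σ = 1 := by
  induction σ with
  | base _ => rfl
  | arrow _ _ _ ihτ => simp [cardT, ihτ]

theorem cardT_le_of_forall_mem_args {N c : ℕ} (σ : Ty) (hc : ∀ ρ ∈ σ.args, cardT N ρ ≤ c) :
    cardT N σ ≤ 2 ^ (N * c ^ σ.args.length) := by
  induction σ with
  | base _ => simp [cardT, Ty.args]
  | arrow σ τ _ ihτ =>
    simp only [Ty.args, List.mem_cons, forall_eq_or_imp] at hc
    calc cardT N τ ^ cardT N σ ≤ (2 ^ (N * c ^ τ.args.length)) ^ cardT N σ :=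
          Nat.pow_le_pow_left (ihτ hc.2) _
      _ ≤ (2 ^ (N * c ^ τ.args.length)) ^ c := Nat.pow_le_pow_right (by positivity) hc.1
      _ = 2 ^ (N * c ^ (σ :: τ.args).length) := by
          rw [← pow_mul, List.length_cons, pow_succ, mul_assoc]

theorem cardT_le_exp2_of_pos {N : ℕ} (hN : 0 < N) (d K : ℕ) :
    ∀ σ : Ty, σ.order ≤ K → σ.maxSpine ≤ d → cardT N σ ≤ exp2 (K + 1) (d ^ K * N) := by
  induction K with
  | zero =>
    rintro (_ | _) hord _
    · simp [cardT, exp2]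
    · simp [Ty.order] at hord
  | succ K ih =>
    intro σ hord hsp
    have hn : σ.args.length < d := σ.length_args_lt_maxSpine.trans_le hsp
    set m := d ^ K * N
    set c := exp2 (K + 1) m
    have hm : N ≤ m := Nat.le_mul_of_pos_left N (Nat.pow_pos (by omega))
    have hc : ∀ ρ ∈ σ.args, cardT N ρ ≤ c := fun ρ hρ =>
      ih ρ (by have := Ty.order_lt_of_mem_args hρ; omega)
        ((Ty.maxSpine_le_of_mem_args hρ).trans hsp)
    have hexp : N * c ^ σ.args.length ≤ exp2 (K + 1) (d ^ (K + 1) * N) :=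
      calc N * c ^ σ.args.length ≤ c ^ (σ.args.length + 1) := by
            rw [pow_succ']
            exact Nat.mul_le_mul_right _ (hm.trans (self_le_exp2 _ m))
        _ ≤ c ^ d := Nat.pow_le_pow_right Nat.one_le_two_pow hn
        _ ≤ exp2 (K + 1) (d * m) := exp2_succ_pow_le K d (by omega)
        _ = exp2 (K + 1) (d ^ (K + 1) * N) := by rw [pow_succ', mul_assoc]
    exact (cardT_le_of_forall_mem_args σ hc).trans (Nat.pow_le_pow_right two_pos hexp)

theorem cardT_le_exp2 (N K d : ℕ) (σ : Ty)
    (horder : σ.order ≤ K) (hspine : σ.maxSpine ≤ d) :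
    cardT N σ ≤ exp2 (K + 1) (d ^ K * N) := by
  rcases Nat.eq_zero_or_pos N with rfl | hN
  · rw [cardT_zero]
    exact Nat.one_le_two_pow
  · exact cardT_le_exp2_of_pos hN d K σ horder hspine
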